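/- Let d ≥ 1, Δ > 0, 0 < ε ≤ 1, 0 < δ < 1, and set σ = (Δ/ε)·√(2 ln(2/δ)). For v ∈ ℝ^d let P_v denote the product measure on ℝ^d whose i-th coordinate is Gaussian with mean v_i and variance σ². Then for all v, w ∈ ℝ^d with ‖v − w‖₂ ≤ Δ and every measurable S ⊆ ℝ^d, P_v(S) ≤ e^ε · P_w(S) + δ. (The multivariate classical Gaussian mechanism bound used in the original functional mechanism analysis.) -/

import Mathlib

/-!
Write `u = v - w`. The two Gaussian laws differ by the density `exp L`, where the privacy loss
`L x = (⟪u, x - v⟫ + ‖u‖² / 2) / σ²` is affine in `x`. On `{L ≤ ε}` this gives the factor `e^ε`;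
under `P_v` the variable `⟪u, x - v⟫` is a sum of independent centred Gaussians, hence
sub-Gaussian with variance proxy `‖u‖² σ² ≤ Δ² σ²`, and the Chernoff bound makes `P_v {L > ε}`
at most `exp (-(4 ln(2/δ) - ε)² / (16 ln(2/δ))) ≤ δ` for the given choice of `σ`.
-/

open MeasureTheory ProbabilityTheory Real
open scoped ENNReal NNReal

lemma MeasureTheory.Measure.pi_eq_withDensity {ι : Type*} [Fintype ι] {Ω : ι → Type*}
    [∀ i, MeasurableSpace (Ω i)] {μ ν : ∀ i, Measure (Ω i)} [∀ i, IsProbabilityMeasure (μ i)]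
    [∀ i, SigmaFinite (ν i)] {f : ∀ i, Ω i → ℝ≥0∞} (hf : ∀ i, Measurable (f i))
    (hν : ∀ i, ν i = (μ i).withDensity (f i)) :
    Measure.pi ν = (Measure.pi μ).withDensity fun x ↦ ∏ i, f i (x i) := by
  refine Measure.pi_eq fun s hs ↦ ?_
  have hind : (Set.univ.pi s).indicator (fun x ↦ ∏ i, f i (x i)) =
      fun x ↦ ∏ i, (s i).indicator (f i) (x i) := by
    ext x
    classical
    simp only [Set.indicator_apply, Finset.prod_ite_zero, Set.mem_univ_pi, Finset.mem_univ,
      true_implies]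
  rw [withDensity_apply _ (MeasurableSet.univ_pi hs), ← lintegral_indicator
    (MeasurableSet.univ_pi hs), hind, lintegral_prod_eq_prod_lintegral_of_indepFun _ _
    (iIndepFun_pi fun i ↦ ((hf i).indicator (hs i)).aemeasurable)
    fun i ↦ ((hf i).indicator (hs i)).comp (measurable_pi_apply i)]
  refine Finset.prod_congr rfl fun i _ ↦ ?_
  rw [hν, withDensity_apply _ (hs i), ← lintegral_indicator (hs i),
    ← (measurePreserving_eval μ i).lintegral_comp ((hf i).indicator (hs i))]

lemma measure_le_exp_mul_add_of_eq_withDensity {α : Type*} [MeasurableSpace α]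
    {μ ν : Measure α} {L : α → ℝ} (hL : Measurable L)
    (hμν : μ = ν.withDensity fun x ↦ ENNReal.ofReal (exp (L x))) {ε : ℝ} {δ : ℝ≥0∞}
    (htail : μ {x | ε < L x} ≤ δ) {S : Set α} (hS : MeasurableSet S) :
    μ S ≤ ENNReal.ofReal (exp ε) * ν S + δ := by
  have hT : MeasurableSet {x | ε < L x} := measurableSet_lt measurable_const hL
  have hbulk : μ (S \ {x | ε < L x}) ≤ ENNReal.ofReal (exp ε) * ν S := by
    calc μ (S \ {x | ε < L x})
        ≤ ∫⁻ _ in S \ {x | ε < L x}, ENNReal.ofReal (exp ε) ∂ν := by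
          rw [hμν, withDensity_apply _ (hS.diff hT)]
          exact setLIntegral_mono measurable_const fun x hx ↦
            ENNReal.ofReal_le_ofReal (exp_le_exp.2 (not_lt.1 hx.2))
      _ ≤ ENNReal.ofReal (exp ε) * ν S := by
          rw [setLIntegral_const]
          gcongr
          exact Set.sdiff_subset
  calc μ S = μ (S \ {x | ε < L x}) + μ (S ∩ {x | ε < L x}) := (measure_sdiff_add_inter S hT).symm
    _ ≤ ENNReal.ofReal (exp ε) * ν S + δ :=
        add_le_add hbulk ((measure_mono Set.inter_subset_right).trans htail)

lemma ProbabilityTheory.HasSubgaussianMGF.mono {Ω : Type*} {mΩ : MeasurableSpace Ω}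
    {μ : Measure Ω} {X : Ω → ℝ} {c c' : ℝ≥0}
    (h : HasSubgaussianMGF X c μ) (hc : c ≤ c') : HasSubgaussianMGF X c' μ where
  integrable_exp_mul := h.integrable_exp_mul
  mgf_le t := (h.mgf_le t).trans (exp_le_exp.2 (by gcongr))

/-- The exponent is the log-likelihood ratio `((x - m')² - (x - m)²) / (2V)`, written as an
affine function of `x - m`. -/
lemma gaussianReal_eq_withDensity_gaussianReal (m m' : ℝ) {V : ℝ≥0} (hV : V ≠ 0) :
    gaussianReal m V = (gaussianReal m' V).withDensity
      fun x ↦ ENNReal.ofReal (exp (((m - m') * (x - m) + (m - m') ^ 2 / 2) / V)) := by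
  rw [gaussianReal_of_var_ne_zero _ hV, gaussianReal_of_var_ne_zero _ hV,
    ← withDensity_mul _ (measurable_gaussianPDF _ _) (by fun_prop)]
  congr 1
  funext x
  rw [Pi.mul_apply, gaussianPDF, gaussianPDF,
    ← ENNReal.ofReal_mul (gaussianPDFReal_nonneg _ _ _), gaussianPDFReal, gaussianPDFReal,
    mul_assoc _ (rexp _), ← exp_add]
  congr 3
  have : (V : ℝ) ≠ 0 := by exact_mod_cast hV
  field_simp
  ring

lemma pi_gaussianReal_eq_withDensity {ι : Type*} [Fintype ι] (m m' : ι → ℝ) {V : ℝ≥0}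
    (hV : V ≠ 0) :
    Measure.pi (fun i ↦ gaussianReal (m i) V) =
      (Measure.pi fun i ↦ gaussianReal (m' i) V).withDensity fun x ↦ ENNReal.ofReal
        (exp ((∑ i, (m i - m' i) * (x i - m i) + (∑ i, (m i - m' i) ^ 2) / 2) / V)) := by
  rw [Measure.pi_eq_withDensity (fun i ↦ by fun_prop)
    fun i ↦ gaussianReal_eq_withDensity_gaussianReal (m i) (m' i) hV]
  congr 1
  funext x
  rw [← ENNReal.ofReal_prod_of_nonneg fun _ _ ↦ (exp_pos _).le, ← exp_sum, ← Finset.sum_div,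
    Finset.sum_add_distrib, ← Finset.sum_div]

lemma hasSubgaussianMGF_sub_gaussianReal (m : ℝ) (V : ℝ≥0) :
    HasSubgaussianMGF (fun x ↦ x - m) V (gaussianReal m V) := by
  have hmap : (gaussianReal m V).map (fun x ↦ x - m) = gaussianReal 0 V := by
    rw [gaussianReal_map_sub_const, sub_self]
  have hmgf (t : ℝ) : mgf (fun x ↦ x - m) (gaussianReal m V) t = exp (V * t ^ 2 / 2) := by
    rw [mgf_gaussianReal hmap, zero_mul, zero_add]
  refine ⟨fun t ↦ mgf_pos_iff.1 ?_, fun t ↦ (hmgf t).le⟩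
  rw [hmgf]
  positivity

lemma hasSubgaussianMGF_pi_gaussianReal_sum {ι : Type*} [Fintype ι] (m u : ι → ℝ) {V c : ℝ≥0}
    (hc : (∑ i, u i ^ 2) * V ≤ c) :
    HasSubgaussianMGF (fun x ↦ ∑ i, u i * (x i - m i)) c
      (Measure.pi fun i ↦ gaussianReal (m i) V) := by
  have hindep : iIndepFun (fun i (x : ι → ℝ) ↦ u i * (x i - m i))
      (Measure.pi fun i ↦ gaussianReal (m i) V) :=
    iIndepFun_pi (X := fun i y ↦ u i * (y - m i)) fun i ↦ by fun_prop
  refine (HasSubgaussianMGF.sum_of_iIndepFun hindep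
    (c := fun i ↦ (⟨u i ^ 2, sq_nonneg (u i)⟩ * V : ℝ≥0)) fun i _ ↦ ?_).mono ?_
  · have hmap : (Measure.pi fun i ↦ gaussianReal (m i) V).map (fun x : ι → ℝ ↦ x i) =
        gaussianReal (m i) V := (measurePreserving_eval _ i).map_eq
    have h := (hasSubgaussianMGF_sub_gaussianReal (m i) V).const_mul (u i)
    rw [← hmap] at h
    have hcoord : Measurable fun x : ι → ℝ ↦ x i := measurable_pi_apply i
    have hcoord_subG := h.of_map hcoord.aemeasurable
    exact hcoord_subG
  · rw [Finset.sum_mul] at hc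
    rwa [← NNReal.coe_le_coe, NNReal.coe_sum]

lemma pi_gaussianReal_sum_ge_le {ι : Type*} [Fintype ι] (m u : ι → ℝ) (V : ℝ≥0) {Δ t : ℝ}
    (hu : ∑ i, u i ^ 2 ≤ Δ ^ 2) (ht : 0 ≤ t) :
    Measure.pi (fun i ↦ gaussianReal (m i) V) {x | t ≤ ∑ i, u i * (x i - m i)} ≤
      ENNReal.ofReal (exp (-t ^ 2 / (2 * (Δ ^ 2 * V)))) := by
  have hX := hasSubgaussianMGF_pi_gaussianReal_sum m u (c := ⟨Δ ^ 2 * V, by positivity⟩)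
    (mul_le_mul_of_nonneg_right hu V.2)
  rw [← ofReal_measureReal]
  exact ENNReal.ofReal_le_ofReal (hX.measure_ge_le ht)

theorem pi_gaussianReal_le_exp_mul_add {ι : Type*} [Fintype ι] (v w : ι → ℝ) {V : ℝ≥0}
    (hV : V ≠ 0) {Δ ε : ℝ} (hvw : ∑ i, (v i - w i) ^ 2 ≤ Δ ^ 2) (hΔε : Δ ^ 2 / 2 ≤ ε * V)
    {S : Set (ι → ℝ)} (hS : MeasurableSet S) :
    Measure.pi (fun i ↦ gaussianReal (v i) V) S ≤
      ENNReal.ofReal (exp ε) * Measure.pi (fun i ↦ gaussianReal (w i) V) S +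
        ENNReal.ofReal (exp (-(ε * V - Δ ^ 2 / 2) ^ 2 / (2 * (Δ ^ 2 * V)))) := by
  refine measure_le_exp_mul_add_of_eq_withDensity (by fun_prop)
    (pi_gaussianReal_eq_withDensity v w hV) ?_ hS
  refine (measure_mono fun x hx ↦ ?_).trans
    (pi_gaussianReal_sum_ge_le v (fun i ↦ v i - w i) V hvw (by linarith))
  have hV0 : (0 : ℝ) < V := by positivity
  rw [Set.mem_ofPred_eq, lt_div_iff₀ hV0] at hx
  rw [Set.mem_ofPred_eq]
  linarith

lemma gaussianMechanism_threshold_and_exponent {Δ ε L s : ℝ} (hΔ : 0 < Δ) (hε0 : 0 < ε)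
    (hε1 : ε ≤ 1) (hL : log 2 ≤ L) (hs : s = 2 * L * Δ ^ 2 / ε ^ 2) :
    Δ ^ 2 / 2 ≤ ε * s ∧ -(ε * s - Δ ^ 2 / 2) ^ 2 / (2 * (Δ ^ 2 * s)) ≤ log 2 - L := by
  have hlog2 := log_two_gt_d9
  have hL0 : 0 < L := by linarith
  have hexponent : (ε * s - Δ ^ 2 / 2) ^ 2 / (2 * (Δ ^ 2 * s)) = (4 * L - ε) ^ 2 / (16 * L) := by
    rw [hs]
    field_simp
    ring
  refine ⟨?_, ?_⟩
  · rw [hs, mul_div_assoc', le_div_iff₀ (by positivity)]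
    nlinarith [sq_nonneg Δ, mul_pos hε0 (pow_pos hΔ 2)]
  · rw [neg_div, hexponent, neg_le, neg_sub, le_div_iff₀ (by positivity)]
    nlinarith

theorem classical_multivariate_gaussian_mechanism_general
    (d : ℕ)
    (Δ ε δ : ℝ) (hΔ : 0 < Δ) (hε0 : 0 < ε) (hε1 : ε ≤ 1) (hδ0 : 0 < δ) (hδ1 : δ < 1)
    (σ : ℝ) (hσ : σ = Δ / ε * Real.sqrt (2 * Real.log (2 / δ)))
    (v w : Fin d → ℝ) (hvw : Real.sqrt (∑ i, (v i - w i) ^ 2) ≤ Δ)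
    (S : Set (Fin d → ℝ)) (hS : MeasurableSet S) :
    Measure.pi (fun i => gaussianReal (v i) ⟨σ ^ 2, sq_nonneg σ⟩) S ≤
      ENNReal.ofReal (Real.exp ε) *
        Measure.pi (fun i => gaussianReal (w i) ⟨σ ^ 2, sq_nonneg σ⟩) S +
        ENNReal.ofReal δ := by
  set L := log (2 / δ) with hL_def
  have hL : log 2 ≤ L := log_le_log two_pos (by rw [le_div_iff₀ hδ0]; linarith)
  have hL0 : 0 < L := (log_pos one_lt_two).trans_le hL
  have hσ2 : σ ^ 2 = 2 * L * Δ ^ 2 / ε ^ 2 := by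
    rw [hσ, mul_pow, sq_sqrt (by positivity)]
    ring
  have hσ2_pos : 0 < σ ^ 2 := by
    rw [hσ2]
    positivity
  have hV : (⟨σ ^ 2, sq_nonneg σ⟩ : ℝ≥0) ≠ 0 := fun h ↦ hσ2_pos.ne' (congrArg Subtype.val h)
  obtain ⟨hthreshold, hexponent⟩ :=
    gaussianMechanism_threshold_and_exponent hΔ hε0 hε1 hL hσ2
  have hlogδ : log 2 - L = log δ := by
    rw [hL_def, log_div two_ne_zero hδ0.ne']
    ring
  calc _ ≤ _ := pi_gaussianReal_le_exp_mul_add v w hV ((sqrt_le_left hΔ.le).1 hvw) hthreshold hS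
    _ ≤ _ := by
      gcongr
      rw [← exp_log hδ0, ← hlogδ]
      exact exp_le_exp.2 hexponent

/-- The multivariate classical Gaussian mechanism bound used in the original functional
mechanism analysis: for ε ≤ 1, noise scale σ = (Δ/ε)√(2 ln(2/δ)) yields (ε, δ)-DP for
isotropic Gaussians on ℝ^d with means at ℓ2-distance at most Δ. -/
theorem classical_multivariate_gaussian_mechanism
    (d : ℕ) (hd : 1 ≤ d)
    (Δ ε δ : ℝ) (hΔ : 0 < Δ) (hε0 : 0 < ε) (hε1 : ε ≤ 1) (hδ0 : 0 < δ) (hδ1 : δ < 1)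
    (σ : ℝ) (hσ : σ = Δ / ε * Real.sqrt (2 * Real.log (2 / δ)))
    (v w : Fin d → ℝ) (hvw : Real.sqrt (∑ i, (v i - w i) ^ 2) ≤ Δ)
    (S : Set (Fin d → ℝ)) (hS : MeasurableSet S) :
    Measure.pi (fun i => gaussianReal (v i) ⟨σ ^ 2, sq_nonneg σ⟩) S ≤
      ENNReal.ofReal (Real.exp ε) *
        Measure.pi (fun i => gaussianReal (w i) ⟨σ ^ 2, sq_nonneg σ⟩) S +
        ENNReal.ofReal δ :=
  classical_multivariate_gaussian_mechanism_general d Δ ε δ hΔ hε0 hε1 hδ0 hδ1 σ hσ v w hvw S hS
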